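/- Let x* ∈ Ω, α > 0, and let 𝐱* := 𝟏_N ⊗ x* ∈ ℝ^{Nn} be the stacked vector whose i-th block equals x* for every agent i. Then the following statements are equivalent: (i) x* is a Nash equilibrium of the game; (ii) 𝐱* solves the variational inequality VI(F_a, 𝛀), i.e., 𝐱* ∈ 𝛀 and ⟨F_a(𝐱*), 𝐲 − 𝐱*⟩ ≥ 0 for all 𝐲 ∈ 𝛀; (iii) 0 ∈ F_a(𝐱*) + N_𝛀(𝐱*). -/

import Mathlib

open scoped InnerProductSpace

/-- The strategy-profile space `ℝ^n = ℝ^{n_1} × ⋯ × ℝ^{n_N}`, with the Euclidean (ℓ²)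
structure. Block `i` is agent `i`'s strategy space `ℝ^{n_i}`. -/
abbrev Prof (N : ℕ) (d : Fin N → ℕ) : Type :=
  PiLp 2 (fun i : Fin N => EuclideanSpace ℝ (Fin (d i)))

/-- The stacked space `ℝ^{Nn}` of all agents' estimates; block `i` is agent `i`'s estimate
`𝐱_i ∈ ℝ^n` of the full strategy profile. -/
abbrev Est (N : ℕ) (d : Fin N → ℕ) : Type :=
  PiLp 2 (fun _ : Fin N => Prof N d)

/-- The pseudo-gradient `F(x) := col(∇_{x_i} J_i(x_i, x_{−i}))_i`, built from the partial
gradients `G i`. -/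
noncomputable def pseudoGrad {N : ℕ} {d : Fin N → ℕ}
    (G : ∀ i : Fin N, Prof N d → EuclideanSpace ℝ (Fin (d i)))
    (x : Prof N d) : Prof N d :=
  WithLp.toLp 2 (fun i => G i x)

/-- The extended pseudo-gradient `𝐅(𝐱) := col(∇_{x_i} J_i(𝐱_{i,i}, 𝐱_{i,−i}))_i`. -/
noncomputable def extPseudoGrad {N : ℕ} {d : Fin N → ℕ}
    (G : ∀ i : Fin N, Prof N d → EuclideanSpace ℝ (Fin (d i)))
    (bx : Est N d) : Prof N d :=
  WithLp.toLp 2 (fun i => G i (bx i))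

/-- `Rᵀ` places block `i` of `v ∈ ℝ^n` in the `(i,i)`-block position of `ℝ^{Nn}`,
with zeros elsewhere. -/
noncomputable def RT {N : ℕ} {d : Fin N → ℕ} (v : Prof N d) : Est N d :=
  WithLp.toLp 2 (fun i => WithLp.toLp 2 (Function.update (0 : Prof N d) i (v i)))

/-- `𝐖 = W ⊗ I_n` acting blockwise: `(𝐖𝐱)_i = Σ_j w_{ij} 𝐱_j`. -/
noncomputable def Wact {N : ℕ} {d : Fin N → ℕ} (W : Matrix (Fin N) (Fin N) ℝ) (bx : Est N d) : Est N d :=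
  WithLp.toLp 2 (fun i => ∑ j, W i j • bx j)

/-- `F_a(𝐱) := α Rᵀ𝐅(𝐱) + (I_{Nn} − 𝐖)𝐱`. -/
noncomputable def Fa {N : ℕ} {d : Fin N → ℕ} (α : ℝ)
    (G : ∀ i : Fin N, Prof N d → EuclideanSpace ℝ (Fin (d i)))
    (W : Matrix (Fin N) (Fin N) ℝ) (bx : Est N d) : Est N d :=
  α • RT (extPseudoGrad G bx) + (bx - Wact W bx)

/-- `𝛀 := {𝐱 ∈ ℝ^{Nn} : 𝐱_{i,i} ∈ Ω_i for all i}`. -/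
def bigOmega {N : ℕ} {d : Fin N → ℕ}
    (Ω : ∀ i : Fin N, Set (EuclideanSpace ℝ (Fin (d i)))) : Set (Est N d) :=
  {bx | ∀ i, bx i i ∈ Ω i}

/-- Normal cone operator of a closed convex set `S` at `x`
(empty if `x ∉ S`). -/
def normalCone {E : Type*} [NormedAddCommGroup E] [InnerProductSpace ℝ E]
    (S : Set E) (x : E) : Set E :=
  {v | x ∈ S ∧ ∀ z ∈ S, ⟪v, z - x⟫_ℝ ≤ 0}

/-- The consensus subspace `E_n := {𝟏_N ⊗ y : y ∈ ℝ^n} ⊆ ℝ^{Nn}`. -/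
def consensus (N : ℕ) (d : Fin N → ℕ) : Set (Est N d) :=
  {bx | ∃ y : Prof N d, ∀ i, bx i = y}

/-!
At a consensus point `𝐱* = 𝟏_N ⊗ x*` the term `(I − 𝐖)𝐱*` vanishes because `W` is row
stochastic, so `⟪F_a(𝐱*), 𝐲 − 𝐱*⟫ = α ∑ᵢ ⟪∇_{x_i}J_i(x*), 𝐲_{i,i} − x*_i⟫` only sees the
diagonal blocks of `𝐲`, and these range independently over the sets `Ω_i`. The variational
inequality therefore splits into the first-order optimality conditions of the `N` convex
problems `min_{y ∈ Ω_i} J_i(y, x*_{−i})`, which by convexity are also sufficient.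
The normal-cone form is the variational inequality with `w = −F_a(𝐱*)`.
-/

open Set

section FirstOrder

variable {E : Type*} [NormedAddCommGroup E] [InnerProductSpace ℝ E] [CompleteSpace E]
  {f : E → ℝ} {g x y : E} {s : Set E}

theorem ConvexOn.inner_gradient_le_sub (hf : ConvexOn ℝ s f) (hg : HasGradientAt f g x)
    (hx : x ∈ s) (hy : y ∈ s) : ⟪g, y - x⟫_ℝ ≤ f y - f x := by
  let ℓ : ℝ →ᵃ[ℝ] E := AffineMap.lineMap x y
  have hline : ConvexOn ℝ (ℓ ⁻¹' s) (f ∘ ℓ) := hf.comp_affineMap ℓ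
  have hderiv : HasDerivAt (f ∘ ℓ) ⟪g, y - x⟫_ℝ 0 := by
    have hg' : HasFDerivAt f (InnerProductSpace.toDual ℝ E g) (ℓ 0) := by
      simpa [ℓ] using hg.hasFDerivAt
    simpa using hg'.comp_hasDerivAt (0 : ℝ) AffineMap.hasDerivAt_lineMap
  simpa [ℓ, slope_def_field] using
    hline.le_slope_of_hasDerivAt (by simpa [ℓ] using hx) (by simpa [ℓ] using hy) one_pos hderiv

theorem IsMinOn.inner_gradient_nonneg (h : IsMinOn f s x) (hs : Convex ℝ s)
    (hg : HasGradientAt f g x) (hx : x ∈ s) (hy : y ∈ s) : 0 ≤ ⟪g, y - x⟫_ℝ := by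
  simpa using h.localize.hasFDerivWithinAt_nonneg hg.hasFDerivAt.hasFDerivWithinAt
    (sub_mem_posTangentConeAt_of_segment_subset (hs.segment_subset hx hy))

theorem ConvexOn.isMinOn_iff_inner_gradient_nonneg (hf : ConvexOn ℝ s f)
    (hg : HasGradientAt f g x) (hx : x ∈ s) :
    IsMinOn f s x ↔ ∀ y ∈ s, 0 ≤ ⟪g, y - x⟫_ℝ :=
  ⟨fun h _ hy => h.inner_gradient_nonneg hf.1 hg hx hy, fun h y hy =>
    sub_nonneg.mp ((h y hy).trans (hf.inner_gradient_le_sub hg hx hy))⟩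

end FirstOrder

theorem forall_sum_nonneg_iff_forall_nonneg {ι : Type*} [Fintype ι] [DecidableEq ι]
    {E : ι → Type*} {S : ∀ i, Set (E i)} {x : ∀ i, E i} (hx : ∀ i, x i ∈ S i)
    {φ : ∀ i, E i → ℝ} (hφ : ∀ i, φ i (x i) = 0) :
    (∀ y : ∀ i, E i, (∀ i, y i ∈ S i) → 0 ≤ ∑ i, φ i (y i)) ↔ ∀ i, ∀ y ∈ S i, 0 ≤ φ i y := by
  refine ⟨fun h i y hy => ?_, fun h y hy => Finset.sum_nonneg fun i _ => h i _ (hy i)⟩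
  have hupdate : ∀ j, Function.update x i y j ∈ S j := by
    intro j
    rcases eq_or_ne j i with rfl | hj
    · simpa using hy
    · simpa [hj] using hx j
  have hsum : ∑ j, φ j (Function.update x i y j) = φ i y := by
    rw [Finset.sum_eq_single i (fun j _ hj => by simp [hj, hφ]) (by simp)]
    simp
  simpa [hsum] using h _ hupdate

theorem exists_mem_normalCone_add_eq_zero_iff {E : Type*} [NormedAddCommGroup E]
    [InnerProductSpace ℝ E] {S : Set E} {x v : E} :
    (∃ w ∈ normalCone S x, v + w = 0) ↔ x ∈ S ∧ ∀ z ∈ S, 0 ≤ ⟪v, z - x⟫_ℝ := by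
  constructor
  · rintro ⟨w, ⟨hx, hw⟩, hvw⟩
    rw [eq_neg_of_add_eq_zero_left hvw]
    exact ⟨hx, fun z hz => by simpa [inner_neg_left] using hw z hz⟩
  · rintro ⟨hx, hv⟩
    exact ⟨-v, ⟨hx, fun z hz => by simpa [inner_neg_left] using hv z hz⟩, add_neg_cancel v⟩

section Consensus

variable {N : ℕ} {d : Fin N → ℕ}

theorem RT_apply_self (v : Prof N d) (i : Fin N) : RT v i i = v i := by
  simp [RT]

theorem inner_RT (v : Prof N d) (z : Est N d) : ⟪RT v, z⟫_ℝ = ∑ i, ⟪v i, z i i⟫_ℝ := by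
  rw [PiLp.inner_apply]
  refine Finset.sum_congr rfl fun i _ => ?_
  rw [PiLp.inner_apply, Finset.sum_eq_single i (fun k _ hk => by simp [RT, hk]) (by simp)]
  simp [RT]

theorem Wact_of_forall_eq {W : Matrix (Fin N) (Fin N) ℝ} (hW : ∀ i, ∑ j, W i j = 1)
    {bx : Est N d} {x : Prof N d} (hbx : ∀ i, bx i = x) : Wact W bx = bx := by
  ext1 i
  simp only [Wact, hbx, ← Finset.sum_smul, hW, one_smul]

theorem extPseudoGrad_of_forall_eq (G : ∀ i : Fin N, Prof N d → EuclideanSpace ℝ (Fin (d i)))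
    {bx : Est N d} {x : Prof N d} (hbx : ∀ i, bx i = x) :
    extPseudoGrad G bx = pseudoGrad G x := by
  simp [extPseudoGrad, pseudoGrad, hbx]

theorem inner_Fa_sub_of_forall_eq (α : ℝ)
    (G : ∀ i : Fin N, Prof N d → EuclideanSpace ℝ (Fin (d i)))
    {W : Matrix (Fin N) (Fin N) ℝ} (hW : ∀ i, ∑ j, W i j = 1)
    {bx : Est N d} {x : Prof N d} (hbx : ∀ i, bx i = x) (z : Est N d) :
    ⟪Fa α G W bx, z - bx⟫_ℝ = α * ∑ i, ⟪G i x, z i i - x i⟫_ℝ := by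
  simp [Fa, Wact_of_forall_eq hW hbx, extPseudoGrad_of_forall_eq G hbx, real_inner_smul_left,
    inner_RT, pseudoGrad, hbx]

theorem forall_mem_bigOmega_iff (Ω : ∀ i : Fin N, Set (EuclideanSpace ℝ (Fin (d i))))
    {P : (∀ i, EuclideanSpace ℝ (Fin (d i))) → Prop} :
    (∀ z ∈ bigOmega Ω, P (fun i => z i i)) ↔
      ∀ y : ∀ i, EuclideanSpace ℝ (Fin (d i)), (∀ i, y i ∈ Ω i) → P y := by
  refine ⟨fun h y hy => ?_, fun h z hz => h _ hz⟩
  have hdiag : (fun i => RT (WithLp.toLp 2 y) i i) = y := funext (RT_apply_self _)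
  exact hdiag ▸ h (RT (WithLp.toLp 2 y)) (fun i => (RT_apply_self _ i).symm ▸ hy i)

end Consensus

theorem stmt5_general {N : ℕ} {d : Fin N → ℕ}
    (Ω : ∀ i : Fin N, Set (EuclideanSpace ℝ (Fin (d i))))
    (hΩ : ∀ i, (Ω i).Nonempty ∧ IsClosed (Ω i) ∧ Convex ℝ (Ω i))
    (J : ∀ _ : Fin N, Prof N d → ℝ)
    (hJconv : ∀ i (x : Prof N d),
      ConvexOn ℝ Set.univ (fun y => J i (WithLp.toLp 2 (Function.update x i y))))
    (G : ∀ i : Fin N, Prof N d → EuclideanSpace ℝ (Fin (d i)))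
    (hGgrad : ∀ i (x : Prof N d),
      HasGradientAt (fun y => J i (WithLp.toLp 2 (Function.update x i y))) (G i x) (x i))
    (W : Matrix (Fin N) (Fin N) ℝ)
    (hWstoch : ∀ i, ∑ j, W i j = 1)
    (α : ℝ) (hα : 0 < α)
    (xstar : Prof N d) (hxstarΩ : ∀ i, xstar i ∈ Ω i)
    (bxstar : Est N d) (hbxstar : ∀ i, bxstar i = xstar) :
    -- (i) ↔ (ii)
    (((∀ i, xstar i ∈ Ω i) ∧
        ∀ i, ∀ y ∈ Ω i, J i xstar ≤ J i (WithLp.toLp 2 (Function.update xstar i y))) ↔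
      (bxstar ∈ bigOmega Ω ∧
        ∀ by_ ∈ bigOmega Ω, ⟪Fa α G W bxstar, by_ - bxstar⟫_ℝ ≥ 0)) ∧
    -- (ii) ↔ (iii)
    ((bxstar ∈ bigOmega Ω ∧
        ∀ by_ ∈ bigOmega Ω, ⟪Fa α G W bxstar, by_ - bxstar⟫_ℝ ≥ 0) ↔
      (∃ w ∈ normalCone (bigOmega Ω) bxstar, Fa α G W bxstar + w = 0)) := by
  have hbxΩ : bxstar ∈ bigOmega Ω := fun i => by simpa [hbxstar i] using hxstarΩ i
  have hagent : ∀ i, (∀ y ∈ Ω i, J i xstar ≤ J i (WithLp.toLp 2 (Function.update xstar i y))) ↔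
      ∀ y ∈ Ω i, 0 ≤ ⟪G i xstar, y - xstar i⟫_ℝ := fun i => by
    have hconv := (hJconv i xstar).subset (subset_univ _) (hΩ i).2.2
    simpa [isMinOn_iff] using
      hconv.isMinOn_iff_inner_gradient_nonneg (hGgrad i xstar) (hxstarΩ i)
  have hVI : (∀ z ∈ bigOmega Ω, ⟪Fa α G W bxstar, z - bxstar⟫_ℝ ≥ 0) ↔
      ∀ i, ∀ y ∈ Ω i, 0 ≤ ⟪G i xstar, y - xstar i⟫_ℝ := by
    simp only [ge_iff_le, inner_Fa_sub_of_forall_eq α G hWstoch hbxstar,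
      mul_nonneg_iff_of_pos_left hα]
    exact (forall_mem_bigOmega_iff Ω (P := fun y => 0 ≤ ∑ i, ⟪G i xstar, y i - xstar i⟫_ℝ)).trans
      (forall_sum_nonneg_iff_forall_nonneg hxstarΩ
        (φ := fun i y => ⟪G i xstar, y - xstar i⟫_ℝ) fun i => by simp)
  refine ⟨?_, exists_mem_normalCone_add_eq_zero_iff.symm⟩
  rw [and_iff_right hxstarΩ, and_iff_right hbxΩ, hVI]
  exact forall_congr' hagent

/-- Lemma 1 of the paper. Under the standing assumptions, for `x* ∈ Ω`,
`α > 0` and `𝐱* := 𝟏_N ⊗ x*`, the following are equivalent: (i) `x*` is a Nash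
equilibrium; (ii) `𝐱*` solves `VI(F_a, 𝛀)`; (iii) `0 ∈ F_a(𝐱*) + N_𝛀(𝐱*)`. -/
theorem stmt5 {N : ℕ} {d : Fin N → ℕ}
    (Ω : ∀ i : Fin N, Set (EuclideanSpace ℝ (Fin (d i))))
    (hΩ : ∀ i, (Ω i).Nonempty ∧ IsClosed (Ω i) ∧ Convex ℝ (Ω i))
    (J : ∀ _ : Fin N, Prof N d → ℝ)
    (hJcont : ∀ i, Continuous (J i))
    (hJconv : ∀ i (x : Prof N d),
      ConvexOn ℝ Set.univ (fun y => J i (WithLp.toLp 2 (Function.update x i y))))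
    (G : ∀ i : Fin N, Prof N d → EuclideanSpace ℝ (Fin (d i)))
    (hGgrad : ∀ i (x : Prof N d),
      HasGradientAt (fun y => J i (WithLp.toLp 2 (Function.update x i y))) (G i x) (x i))
    (μ θ0 : ℝ) (hμ : 0 < μ) (hθ0 : 0 < θ0)
    (hFmon : ∀ x y : Prof N d,
      ⟪x - y, pseudoGrad G x - pseudoGrad G y⟫_ℝ ≥ μ * ‖x - y‖ ^ 2)
    (hFlip : ∀ x y : Prof N d, ‖pseudoGrad G x - pseudoGrad G y‖ ≤ θ0 * ‖x - y‖)
    (W : Matrix (Fin N) (Fin N) ℝ)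
    (hWsymm : W.IsSymm) (hWnonneg : ∀ i j, 0 ≤ W i j)
    (hWstoch : ∀ i, ∑ j, W i j = 1) (hWdiag : ∀ i, 0 < W i i)
    (hWconn : ∀ S : Finset (Fin N), S.Nonempty → S ≠ Finset.univ →
      ∃ i ∈ S, ∃ j ∉ S, 0 < W i j)
    (α : ℝ) (hα : 0 < α)
    (xstar : Prof N d) (hxstarΩ : ∀ i, xstar i ∈ Ω i)
    (bxstar : Est N d) (hbxstar : ∀ i, bxstar i = xstar) :
    -- (i) ↔ (ii)
    (((∀ i, xstar i ∈ Ω i) ∧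
        ∀ i, ∀ y ∈ Ω i, J i xstar ≤ J i (WithLp.toLp 2 (Function.update xstar i y))) ↔
      (bxstar ∈ bigOmega Ω ∧
        ∀ by_ ∈ bigOmega Ω, ⟪Fa α G W bxstar, by_ - bxstar⟫_ℝ ≥ 0)) ∧
    -- (ii) ↔ (iii)
    ((bxstar ∈ bigOmega Ω ∧
        ∀ by_ ∈ bigOmega Ω, ⟪Fa α G W bxstar, by_ - bxstar⟫_ℝ ≥ 0) ↔
      (∃ w ∈ normalCone (bigOmega Ω) bxstar, Fa α G W bxstar + w = 0)) :=
  stmt5_general Ω hΩ J hJconv G hGgrad W hWstoch α hα xstar hxstarΩ bxstar hbxstar
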